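/- Let Δ_n(M²) = f_n(M, z²), the Riley polynomial f_n of the kmot group G(e(n)) evaluated at λ = 0 (so λ̃ = z²), which is the normalized Alexander polynomial of G(e(n)) at t = M². With δ₁ = 1, δ_i = e_{i−1}·e_i for i ≥ 2, and β_m = Σ_{i=1}^{m} δ₁·δ₂⋯δ_i, for every n ≥ 0: Δ_{n+1}(M²) + Δ_n(M²) = M^{2β_{n+1}} + M^{−2β_{n+1}}. -/

import Mathlib

abbrev Mat := Matrix (Fin 2) (Fin 2) ℂ

/-- Admissibility of a tuple `i : Fin k → ℕ`: strictly increasing, values in `[1, n]`,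
and the `j`-th entry (0-based) has parity `(j + start) % 2`.  `start = 1` gives the
"odd-start admissible" tuples (`i_j` odd for odd 1-based positions `j`), while
`start = 0` gives the "even-start admissible" tuples. -/
def Adm (n k start : ℕ) (i : Fin k → ℕ) : Prop :=
  (∀ j j' : Fin k, j < j' → i j < i j') ∧
  (∀ j : Fin k, 1 ≤ i j ∧ i j ≤ n) ∧
  (∀ j : Fin k, i j % 2 = (j.val + start) % 2)

instance (n k start : ℕ) : DecidablePred (Adm n k start) := fun _ => by
  unfold Adm; infer_instance

/-- `ĥ(i₁,…,i_k)`: the signed sum of the `ε_t`, `1 ≤ t ≤ n`, omitting the `t` lying in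
the tuple, where `ε_t` gets the sign `(−1)^{#{j : i_j < t}}`; this agrees with
`(ε₁+⋯+ε_{i₁−1}) − (ε_{i₁+1}+⋯+ε_{i₂−1}) + ⋯ + (−1)^k (ε_{i_k+1}+⋯+ε_n)`. -/
def hatSum (n : ℕ) (ε : ℕ → ℤ) {k : ℕ} (i : Fin k → ℕ) : ℤ :=
  ∑ t ∈ Finset.Icc 1 n,
    if ∃ j, i j = t then 0
    else (-1) ^ (Finset.univ.filter fun j : Fin k => i j < t).card * ε t

/-- `ĥᵃˡᵗ(i₁,…,i_k)`: the alternating sum (signs −,+,−,+,… in increasing order)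
of the `ε_t`, `1 ≤ t ≤ n`, with `t` not in the tuple. -/
def hatAltSum (n : ℕ) (ε : ℕ → ℤ) {k : ℕ} (i : Fin k → ℕ) : ℤ :=
  ∑ t ∈ Finset.Icc 1 n,
    if ∃ j, i j = t then 0
    else (-1) ^ ((Finset.Icc 1 t).filter fun s => ¬∃ j, i j = s).card * ε t

/-- `c_k^n(M, ε) = Σ ε_{i₁}⋯ε_{i_k}·M^{ĥ(i₁,…,i_k)}` over odd-start admissible tuples.
For `k = 0` this is `M^{ε₁+⋯+ε_n}`, and it vanishes for `k > n`. -/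
noncomputable def cP (n k : ℕ) (ε : ℕ → ℤ) (M : ℂ) : ℂ :=
  ∑ i : Fin k → Fin (n + 1),
    if Adm n k 1 (fun j => (i j : ℕ))
    then (∏ j : Fin k, (ε (i j : ℕ) : ℂ)) * M ^ hatSum n ε (fun j => (i j : ℕ))
    else 0

/-- `d_k^n(M, ε) = Σ ε_{i₁}⋯ε_{i_k}·M^{−ĥ(i₁,…,i_k)}` over even-start admissible tuples.
For `k = 0` this is `M^{−(ε₁+⋯+ε_n)}`, and it vanishes for `k > n`. -/
noncomputable def dP (n k : ℕ) (ε : ℕ → ℤ) (M : ℂ) : ℂ :=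
  ∑ i : Fin k → Fin (n + 1),
    if Adm n k 0 (fun j => (i j : ℕ))
    then (∏ j : Fin k, (ε (i j : ℕ) : ℂ)) * M ^ (-hatSum n ε (fun j => (i j : ℕ)))
    else 0

/-- `c̃_k^n(M, ε) = Σ ε_{i₁}⋯ε_{i_k}·M^{ĥᵃˡᵗ(i₁,…,i_k)}` over odd-start admissible
tuples.  For `k = 0` this is `M^{−ε₁+ε₂−⋯+(−1)ⁿ εₙ}`, it equals `1` for `k = n = 0`,
and it vanishes for `k > n`. -/
noncomputable def cT (n k : ℕ) (ε : ℕ → ℤ) (M : ℂ) : ℂ :=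
  ∑ i : Fin k → Fin (n + 1),
    if Adm n k 1 (fun j => (i j : ℕ))
    then (∏ j : Fin k, (ε (i j : ℕ) : ℂ)) * M ^ hatAltSum n ε (fun j => (i j : ℕ))
    else 0

/-- `d̃_k^n(M, ε) = Σ ε_{i₁}⋯ε_{i_k}·M^{−ĥᵃˡᵗ(i₁,…,i_k)}` over even-start admissible
tuples. -/
noncomputable def dT (n k : ℕ) (ε : ℕ → ℤ) (M : ℂ) : ℂ :=
  ∑ i : Fin k → Fin (n + 1),
    if Adm n k 0 (fun j => (i j : ℕ))
    then (∏ j : Fin k, (ε (i j : ℕ) : ℂ)) * M ^ (-hatAltSum n ε (fun j => (i j : ℕ)))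
    else 0

/-- The symmetric sequence `e(n) = (e_n, …, e₂, e₁, e₁, e₂, …, e_n)` of length `2n`,
as a function of the position `i ∈ {1, …, 2n}`. -/
def eseq (e : ℕ → ℤ) (n : ℕ) : ℕ → ℤ := fun i => if i ≤ n then e (n + 1 - i) else e (i - n)

/-- `f_n(M,λ̃) = Σ_{k=0}^{n} c̃_{2k}^{2n}(M, e(n))·λ̃ᵏ`, the Riley polynomial of the kmot
group `G(e(n))`; in particular `f₀ = 1`. -/
noncomputable def fpoly (e : ℕ → ℤ) (M lamT : ℂ) (n : ℕ) : ℂ :=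
  ∑ k ∈ Finset.range (n + 1), cT (2 * n) (2 * k) (eseq e n) M * lamT ^ k

/-- `g_n(M,λ̃) = Σ_{k=0}^{n−1} c̃_{2k+1}^{2n}(M, e(n))·λ̃ᵏ`; in particular `g₀ = 0`. -/
noncomputable def gpoly (e : ℕ → ℤ) (M lamT : ℂ) (n : ℕ) : ℂ :=
  ∑ k ∈ Finset.range n, cT (2 * n) (2 * k + 1) (eseq e n) M * lamT ^ k

-- Lemmas part 1
lemma adm_inj {n k s : ℕ} {i : Fin k → ℕ} (h : Adm n k s i) : Function.Injective i := by
  intro a b hab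
  by_contra hne
  rcases lt_or_gt_of_ne hne with hlt | hlt
  · exact absurd hab (Nat.ne_of_lt (h.1 a b hlt))
  · exact absurd hab.symm (Nat.ne_of_lt (h.1 b a hlt))

lemma adm_card_le {n k s : ℕ} {i : Fin k → ℕ} (h : Adm n k s i) : k ≤ n := by
  have := Finset.card_le_card_of_injOn (s := Finset.univ) (t := Finset.Icc 1 n) i
    (fun j _ => Finset.mem_Icc.2 ⟨(h.2.1 j).1, (h.2.1 j).2⟩)
    (adm_inj h).injOn
  simpa using this

lemma cT_big {n k : ℕ} {ε : ℕ → ℤ} {M : ℂ} (h : n < k) : cT n k ε M = 0 := by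
  refine Finset.sum_eq_zero fun i _ => ?_
  rw [if_neg]
  intro hadm
  exact absurd (adm_card_le hadm) (by omega)

lemma filter_mem_card {k n : ℕ} (i : Fin k → ℕ) (hinj : Function.Injective i)
    (hb : ∀ j, i j ∈ Finset.Icc 1 n) :
    ((Finset.Icc 1 n).filter fun s => ∃ j, i j = s).card = k := by
  have : ((Finset.Icc 1 n).filter fun s => ∃ j, i j = s) = Finset.univ.image i := by
    ext s
    simp only [Finset.mem_filter, Finset.mem_image, Finset.mem_univ, true_and]
    constructor
    · rintro ⟨-, j, rfl⟩; exact ⟨j, rfl⟩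
    · rintro ⟨j, rfl⟩; exact ⟨hb j, j, rfl⟩
  rw [this, Finset.card_image_of_injective _ hinj, Finset.card_univ, Fintype.card_fin]

lemma filter_not_mem_card {k n : ℕ} (i : Fin k → ℕ) (hinj : Function.Injective i)
    (hb : ∀ j, i j ∈ Finset.Icc 1 n) :
    ((Finset.Icc 1 n).filter fun s => ¬∃ j, i j = s).card = n - k := by
  have h1 := Finset.card_filter_add_card_filter_not (s := Finset.Icc 1 n)
    (p := fun s => ∃ j, i j = s)
  rw [filter_mem_card i hinj hb] at h1
  have h2 : (Finset.Icc 1 n).card = n := by simp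
  omega
-- Part 2: hatAltSum lemmas
lemma hatAltSum_congr {n k k' : ℕ} {ε : ℕ → ℤ} (i : Fin k → ℕ) (i' : Fin k' → ℕ)
    (h : ∀ t, 1 ≤ t → t ≤ n → ((∃ j, i j = t) ↔ (∃ j', i' j' = t))) :
    hatAltSum n ε i = hatAltSum n ε i' := by
  unfold hatAltSum
  refine Finset.sum_congr rfl fun t ht => ?_
  obtain ⟨ht1, ht2⟩ := Finset.mem_Icc.1 ht
  have hcard : ((Finset.Icc 1 t).filter fun s => ¬∃ j, i j = s)
      = ((Finset.Icc 1 t).filter fun s => ¬∃ j', i' j' = s) := by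
    refine Finset.filter_congr fun s hs => ?_
    obtain ⟨hs1, hs2⟩ := Finset.mem_Icc.1 hs
    rw [h s hs1 (le_trans hs2 ht2)]
  rw [hcard]
  by_cases hex : ∃ j, i j = t
  · rw [if_pos hex, if_pos ((h t ht1 ht2).1 hex)]
  · rw [if_neg hex, if_neg (fun hc => hex ((h t ht1 ht2).2 hc))]

lemma hatAltSum_succ_top {n k : ℕ} {ε : ℕ → ℤ} (i : Fin k → ℕ) :
    hatAltSum (n + 1) ε i = hatAltSum n ε i +
      (if ∃ j, i j = n + 1 then 0
       else (-1) ^ ((Finset.Icc 1 (n+1)).filter fun s => ¬∃ j, i j = s).card * ε (n+1)) := by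
  unfold hatAltSum
  rw [← Finset.sum_Icc_succ_top (by omega : 1 ≤ n + 1)]

/-- The surviving case: extend from `n` to `n+1` with no tuple entry equal to `n+1`. -/
lemma hatAltSum_succ_surv {n k : ℕ} {ε : ℕ → ℤ} (i : Fin k → ℕ)
    (hinj : Function.Injective i) (hb : ∀ j, i j ∈ Finset.Icc 1 n) (hk : k ≤ n) :
    hatAltSum (n + 1) ε i = hatAltSum n ε i + (-1) ^ (n + 1 + k) * ε (n + 1) := by
  have hnot : ¬∃ j, i j = n + 1 := by
    rintro ⟨j, hj⟩
    have := (Finset.mem_Icc.1 (hb j)).2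
    omega
  rw [hatAltSum_succ_top, if_neg hnot]
  have hb' : ∀ j, i j ∈ Finset.Icc 1 (n+1) := fun j => by
    have := Finset.mem_Icc.1 (hb j); exact Finset.mem_Icc.2 ⟨this.1, by omega⟩
  rw [filter_not_mem_card i hinj hb']
  congr 2
  have h2 : n + 1 - k + 2 * k = n + 1 + k := by omega
  calc ((-1 : ℤ)) ^ (n + 1 - k) = (-1) ^ (n + 1 - k) * ((-1) ^ 2) ^ k := by norm_num
    _ = (-1) ^ (n + 1 - k + 2 * k) := by rw [← pow_mul, ← pow_add]
    _ = (-1) ^ (n + 1 + k) := by rw [h2]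

-- Part 3: the cT recursion
lemma adm_last {m k s : ℕ} (i : Fin (k+1) → Fin (m+2))
    (hadm : Adm (m+1) (k+1) s (fun j => (i j : ℕ)))
    (hnp : ¬∀ j, (i j : ℕ) ≤ m) :
    (i (Fin.last k) : ℕ) = m + 1 ∧ ∀ j : Fin k, (i j.castSucc : ℕ) ≤ m := by
  push_neg at hnp
  obtain ⟨j0, hj0⟩ := hnp
  have hj0b : (i j0 : ℕ) ≤ m + 1 := (hadm.2.1 j0).2
  have hj0v : (i j0 : ℕ) = m + 1 := by omega
  have hlast : j0 = Fin.last k := by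
    by_contra h
    have hlt : j0 < Fin.last k := Fin.lt_last_iff_ne_last.2 h
    have h1 : (i j0 : ℕ) < (i (Fin.last k) : ℕ) := hadm.1 j0 (Fin.last k) hlt
    have h2 : (i (Fin.last k) : ℕ) ≤ m + 1 := (hadm.2.1 (Fin.last k)).2
    omega
  subst hlast
  refine ⟨hj0v, fun j => ?_⟩
  have h1 : (i j.castSucc : ℕ) < (i (Fin.last k) : ℕ) :=
    hadm.1 j.castSucc (Fin.last k) (Fin.castSucc_lt_last j)
  omega

lemma adm_le_iff {m k s : ℕ} {f : Fin k → ℕ} (hb : ∀ j, f j ≤ m) :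
    Adm (m+1) k s f ↔ Adm m k s f := by
  constructor <;> rintro ⟨h1, h2, h3⟩ <;>
    exact ⟨h1, fun j => ⟨(h2 j).1, by have := hb j; omega⟩, h3⟩

lemma sum_part1 {m k : ℕ} (ε : ℕ → ℤ) (M : ℂ) (hM0 : M ≠ 0) :
    ∑ i ∈ Finset.univ.filter (fun i : Fin k → Fin (m+2) => ∀ j, (i j : ℕ) ≤ m),
      (if Adm (m+1) k 1 (fun j => (i j : ℕ))
       then (∏ j, (ε (i j : ℕ) : ℂ)) * M ^ hatAltSum (m+1) ε (fun j => (i j : ℕ)) else 0)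
    = M ^ ((-1:ℤ)^(m+1+k) * ε (m+1)) * cT m k ε M := by
  rw [cT, Finset.mul_sum]
  refine Finset.sum_bij'
    (i := fun (a : Fin k → Fin (m+2)) (ha : a ∈ _) =>
      (fun j => (⟨(a j : ℕ), by
        simp only [Finset.mem_filter, Finset.mem_univ, true_and] at ha
        have := ha j; omega⟩ : Fin (m+1))))
    (j := fun (a : Fin k → Fin (m+1)) _ => (fun j => (a j).castSucc))
    ?_ ?_ ?_ ?_ ?_
  · intro a ha; exact Finset.mem_univ _
  · intro a ha
    simp only [Finset.mem_filter, Finset.mem_univ, true_and]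
    intro j
    simpa using Fin.is_le (a j)
  · intro a ha; funext j; ext; simp
  · intro a ha; funext j; ext; simp
  · intro a ha
    simp only [Finset.mem_filter, Finset.mem_univ, true_and] at ha
    show _ = M ^ ((-1:ℤ)^(m+1+k) * ε (m+1)) *
      (if Adm m k 1 (fun j => (a j : ℕ))
       then (∏ j, (ε (a j : ℕ) : ℂ)) * M ^ hatAltSum m ε (fun j => (a j : ℕ)) else 0)
    by_cases hadm : Adm m k 1 (fun j => (a j : ℕ))
    · rw [if_pos ((adm_le_iff ha).2 hadm), if_pos hadm]
      have hk : k ≤ m := adm_card_le hadm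
      have hinj : Function.Injective (fun j => (a j : ℕ)) := adm_inj hadm
      have hb : ∀ j, (fun j => (a j : ℕ)) j ∈ Finset.Icc 1 m := fun j =>
        Finset.mem_Icc.2 ⟨(hadm.2.1 j).1, (hadm.2.1 j).2⟩
      rw [hatAltSum_succ_surv (fun j => (a j : ℕ)) hinj hb hk, zpow_add₀ hM0]
      ring
    · rw [if_neg (fun hcon => hadm ((adm_le_iff ha).1 hcon)), if_neg hadm, mul_zero]

lemma snoc_term {m k : ℕ} (ε : ℕ → ℤ) (M : ℂ) (hpar : (m+1) % 2 = (k+1) % 2)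
    (i' : Fin k → Fin (m+1)) (a : Fin (k+1) → Fin (m+2))
    (hc : ∀ j : Fin k, (a j.castSucc : ℕ) = (i' j : ℕ))
    (hl : (a (Fin.last k) : ℕ) = m + 1) :
    (if Adm (m+1) (k+1) 1 (fun j => (a j : ℕ))
     then (∏ j, (ε (a j : ℕ) : ℂ)) * M ^ hatAltSum (m+1) ε (fun j => (a j : ℕ)) else 0)
    = (ε (m+1) : ℂ) *
      (if Adm m k 1 (fun j => (i' j : ℕ))
       then (∏ j, (ε (i' j : ℕ) : ℂ)) * M ^ hatAltSum m ε (fun j => (i' j : ℕ)) else 0) := by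
  have hA : Adm (m+1) (k+1) 1 (fun j => (a j : ℕ)) ↔ Adm m k 1 (fun j => (i' j : ℕ)) := by
    constructor
    · rintro ⟨h1, h2, h3⟩
      refine ⟨?_, ?_, ?_⟩
      · intro j j' hlt
        have h4 : (a j.castSucc : ℕ) < (a j'.castSucc : ℕ) :=
          h1 j.castSucc j'.castSucc (by simpa using hlt)
        rw [hc, hc] at h4
        exact h4
      · intro j
        have hge : 1 ≤ (a j.castSucc : ℕ) := (h2 j.castSucc).1
        rw [hc] at hge
        exact ⟨hge, Fin.is_le (i' j)⟩
      · intro j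
        have h5 : (a j.castSucc : ℕ) % 2 = (j.castSucc.val + 1) % 2 := h3 j.castSucc
        rw [hc] at h5
        simpa using h5
    · rintro ⟨h1, h2, h3⟩
      refine ⟨?_, ?_, ?_⟩
      · intro j j' hlt
        rcases Fin.eq_castSucc_or_eq_last j' with ⟨j'', rfl⟩ | rfl
        · rcases Fin.eq_castSucc_of_ne_last (x := j)
            (Fin.ne_of_lt (lt_trans hlt (Fin.castSucc_lt_last j''))) with ⟨y, rfl⟩
          show (a y.castSucc : ℕ) < (a j''.castSucc : ℕ)
          rw [hc, hc]
          exact h1 y j'' (by simpa using hlt)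
        · rcases Fin.eq_castSucc_of_ne_last (x := j) (Fin.ne_of_lt hlt) with ⟨y, rfl⟩
          show (a y.castSucc : ℕ) < (a (Fin.last k) : ℕ)
          rw [hc, hl]
          have := (h2 y).2
          omega
      · intro j
        rcases Fin.eq_castSucc_or_eq_last j with ⟨y, rfl⟩ | rfl
        · show 1 ≤ (a y.castSucc : ℕ) ∧ (a y.castSucc : ℕ) ≤ m + 1
          rw [hc]; exact ⟨(h2 y).1, by have := (h2 y).2; omega⟩
        · show 1 ≤ (a (Fin.last k) : ℕ) ∧ (a (Fin.last k) : ℕ) ≤ m + 1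
          rw [hl]; omega
      · intro j
        rcases Fin.eq_castSucc_or_eq_last j with ⟨y, rfl⟩ | rfl
        · show (a y.castSucc : ℕ) % 2 = (y.castSucc.val + 1) % 2
          rw [hc]; simpa using h3 y
        · show (a (Fin.last k) : ℕ) % 2 = ((Fin.last k).val + 1) % 2
          rw [hl]; simpa using hpar
  by_cases hadm : Adm m k 1 (fun j => (i' j : ℕ))
  · rw [if_pos (hA.2 hadm), if_pos hadm]
    have hprod : (∏ j, (ε (a j : ℕ) : ℂ)) = (∏ j : Fin k, (ε (i' j : ℕ) : ℂ)) * (ε (m+1) : ℂ) := by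
      rw [Fin.prod_univ_castSucc]
      congr 1
      · exact Finset.prod_congr rfl fun j _ => by rw [hc]
      · rw [hl]
    have hhat : hatAltSum (m+1) ε (fun j => (a j : ℕ)) = hatAltSum m ε (fun j => (i' j : ℕ)) := by
      rw [hatAltSum_succ_top, if_pos ⟨Fin.last k, hl⟩, add_zero]
      refine hatAltSum_congr _ _ fun t ht1 ht2 => ?_
      constructor
      · rintro ⟨j, hj⟩
        rcases Fin.eq_castSucc_or_eq_last j with ⟨y, rfl⟩ | rfl
        · exact ⟨y, by rw [← hc]; exact hj⟩
        · rw [hl] at hj; omega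
      · rintro ⟨j, hj⟩
        exact ⟨j.castSucc, by rw [hc]; exact hj⟩
    rw [hprod, hhat]
    ring
  · rw [if_neg (fun hcon => hadm (hA.1 hcon)), if_neg hadm, mul_zero]

lemma sum_part2 {m k : ℕ} (ε : ℕ → ℤ) (M : ℂ) :
    ∑ i ∈ Finset.univ.filter (fun i : Fin (k+1) → Fin (m+2) => ¬∀ j, (i j : ℕ) ≤ m),
      (if Adm (m+1) (k+1) 1 (fun j => (i j : ℕ))
       then (∏ j, (ε (i j : ℕ) : ℂ)) * M ^ hatAltSum (m+1) ε (fun j => (i j : ℕ)) else 0)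
    = if (m+1) % 2 = (k+1) % 2 then (ε (m+1) : ℂ) * cT m k ε M else 0 := by
  by_cases hpar : (m+1) % 2 = (k+1) % 2
  · rw [if_pos hpar, cT, Finset.mul_sum]
    refine Finset.sum_bij_ne_zero (i := fun (a : Fin (k+1) → Fin (m+2)) ha hne =>
        (fun j => (⟨(a j.castSucc : ℕ), by
          have hadm : Adm (m+1) (k+1) 1 (fun j => (a j : ℕ)) := by
            by_contra hcon; exact hne (if_neg hcon)
          simp only [Finset.mem_filter, Finset.mem_univ, true_and] at ha
          have := (adm_last a hadm ha).2 j
          omega⟩ : Fin (m+1))))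
      ?_ ?_ ?_ ?_
    · intro a h1 h2; exact Finset.mem_univ _
    · intro a1 h11 h12 a2 h21 h22 heq
      have hadm1 : Adm (m+1) (k+1) 1 (fun j => (a1 j : ℕ)) := by
        by_contra hcon; exact h12 (if_neg hcon)
      have hadm2 : Adm (m+1) (k+1) 1 (fun j => (a2 j : ℕ)) := by
        by_contra hcon; exact h22 (if_neg hcon)
      simp only [Finset.mem_filter, Finset.mem_univ, true_and] at h11 h21
      funext j
      rcases Fin.eq_castSucc_or_eq_last j with ⟨y, rfl⟩ | rfl
      · have := congrFun heq y
        simp only [Fin.mk.injEq] at this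
        exact Fin.ext this
      · exact Fin.ext (((adm_last a1 hadm1 h11).1).trans ((adm_last a2 hadm2 h21).1).symm)
    · intro i' _ hgne
      refine ⟨Fin.snoc (fun j' => (i' j').castSucc) (Fin.last (m+1)), ?_, ?_, ?_⟩
      · simp only [Finset.mem_filter, Finset.mem_univ, true_and]
        push_neg
        refine ⟨Fin.last k, ?_⟩
        simp [Fin.snoc_last]
      · rw [snoc_term ε M hpar i' _ (fun j => by simp [Fin.snoc_castSucc])
          (by simp [Fin.snoc_last])]
        exact hgne
      · funext j
        ext
        simp [Fin.snoc_castSucc]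
    · intro a ha hne
      have hadm : Adm (m+1) (k+1) 1 (fun j => (a j : ℕ)) := by
        by_contra hcon; exact hne (if_neg hcon)
      simp only [Finset.mem_filter, Finset.mem_univ, true_and] at ha
      obtain ⟨hlast, hble⟩ := adm_last a hadm ha
      exact snoc_term ε M hpar _ a (fun j => rfl) hlast
  · rw [if_neg hpar]
    refine Finset.sum_eq_zero fun a ha => ?_
    rw [if_neg]
    intro hadm
    simp only [Finset.mem_filter, Finset.mem_univ, true_and] at ha
    have hlast := (adm_last a hadm ha).1
    have hp : (a (Fin.last k) : ℕ) % 2 = ((Fin.last k).val + 1) % 2 := hadm.2.2 (Fin.last k)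
    rw [hlast] at hp
    simp only [Fin.val_last] at hp
    exact hpar hp

lemma cT_succ {m k : ℕ} (ε : ℕ → ℤ) (M : ℂ) (hM0 : M ≠ 0) :
    cT (m+1) (k+1) ε M = M ^ ((-1:ℤ)^(m+k) * ε (m+1)) * cT m (k+1) ε M
      + (if (m+1) % 2 = (k+1) % 2 then (ε (m+1) : ℂ) * cT m k ε M else 0) := by
  have hsplit := Finset.sum_filter_add_sum_filter_not
    (Finset.univ : Finset (Fin (k+1) → Fin (m+2)))
    (fun i => ∀ j, (i j : ℕ) ≤ m)
    (fun i => if Adm (m+1) (k+1) 1 (fun j => (i j : ℕ))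
      then (∏ j, (ε (i j : ℕ) : ℂ)) * M ^ hatAltSum (m+1) ε (fun j => (i j : ℕ)) else 0)
  have hexp : ((-1:ℤ))^(m+1+(k+1)) = (-1)^(m+k) := by
    have h9 : m+1+(k+1) = m+k+2 := by omega
    rw [h9, pow_add]; norm_num
  rw [cT, ← hsplit, sum_part1 ε M hM0, sum_part2 ε M, hexp]

lemma cT_zero_eq {m : ℕ} (ε : ℕ → ℤ) (M : ℂ) :
    cT m 0 ε M = M ^ hatAltSum m ε (fun j : Fin 0 => (j.elim0 : ℕ)) := by
  rw [cT, Fintype.sum_unique]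
  rw [if_pos ⟨fun j => j.elim0, fun j => j.elim0, fun j => j.elim0⟩]
  rw [Fin.prod_univ_zero, one_mul]
  congr 1

lemma cT_succ_zero {m : ℕ} (ε : ℕ → ℤ) (M : ℂ) (hM0 : M ≠ 0) :
    cT (m+1) 0 ε M = M ^ ((-1:ℤ)^(m+1) * ε (m+1)) * cT m 0 ε M := by
  rw [cT_zero_eq, cT_zero_eq]
  rw [hatAltSum_succ_surv (fun j : Fin 0 => (j.elim0 : ℕ)) (fun j => j.elim0)
    (fun j => j.elim0) (Nat.zero_le m)]
  rw [zpow_add₀ hM0, Nat.add_zero]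
  ring

-- Part 4: transfer matrices and the top-row recursion
noncomputable def Tm (M : ℂ) (a : ℤ) : Matrix (Fin 2) (Fin 2) ℂ :=
  !![(a : ℂ) * (M - M⁻¹), M ^ (-a); M ^ a, 0]

noncomputable def Pw (M : ℂ) (ε : ℕ → ℤ) : ℕ → Matrix (Fin 2) (Fin 2) ℂ
  | 0 => 1
  | m + 1 => Pw M ε m * Tm M (ε (m+1))

noncomputable def Xs (M : ℂ) (ε : ℕ → ℤ) (m : ℕ) : ℂ :=
  ∑ k ∈ Finset.range (m+1), if (m + k) % 2 = 0 then cT m k ε M * (M - M⁻¹) ^ k else 0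

noncomputable def Ys (M : ℂ) (ε : ℕ → ℤ) (m : ℕ) : ℂ :=
  ∑ k ∈ Finset.range (m+1), if (m + k) % 2 = 1 then cT m k ε M * (M - M⁻¹) ^ k else 0

lemma Ys_succ (M : ℂ) (ε : ℕ → ℤ) (m : ℕ) (hM0 : M ≠ 0) :
    Ys M ε (m+1) = M ^ (-ε (m+1)) * Xs M ε m := by
  rw [Ys, Finset.sum_range_succ', Finset.sum_range_succ, Xs, Finset.mul_sum,
    Finset.sum_range_succ' (fun k => M ^ (-ε (m+1)) *
      (if (m + k) % 2 = 0 then cT m k ε M * (M - M⁻¹) ^ k else 0)) m]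
  have htop : (if (m + 1 + (m + 1)) % 2 = 1 then cT (m+1) (m+1) ε M * (M - M⁻¹) ^ (m+1) else 0)
      = 0 := by rw [if_neg (by omega)]
  rw [htop, add_zero]
  congr 1
  · refine Finset.sum_congr rfl fun k _ => ?_
    by_cases hp : (m + k) % 2 = 1
    · rw [if_pos (by omega : (m + 1 + (k + 1)) % 2 = 1),
        if_pos (by omega : (m + (k+1)) % 2 = 0),
        cT_succ ε M hM0, if_neg (by omega),
        add_zero, Odd.neg_one_pow (by rw [Nat.odd_iff]; omega)]
      ring
    · rw [if_neg (by omega), if_neg (by omega), mul_zero]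
  · by_cases hp : m % 2 = 0
    · rw [if_pos (by omega), if_pos (by omega : (m + 0) % 2 = 0),
        cT_succ_zero ε M hM0, Odd.neg_one_pow (by rw [Nat.odd_iff]; omega)]
      ring
    · rw [if_neg (by omega), if_neg (by omega), mul_zero]

lemma Xs_succ (M : ℂ) (ε : ℕ → ℤ) (m : ℕ) (hM0 : M ≠ 0) :
    Xs M ε (m+1) = (ε (m+1) : ℂ) * (M - M⁻¹) * Xs M ε m + M ^ (ε (m+1)) * Ys M ε m := by
  rw [Xs, Finset.sum_range_succ']
  have hsum : ∀ k ∈ Finset.range (m+1),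
      (if (m + 1 + (k+1)) % 2 = 0 then cT (m+1) (k+1) ε M * (M - M⁻¹) ^ (k+1) else 0)
      = (ε (m+1) : ℂ) * (M - M⁻¹) *
          (if (m + k) % 2 = 0 then cT m k ε M * (M - M⁻¹) ^ k else 0)
        + M ^ (ε (m+1)) *
          (if (m + (k+1)) % 2 = 1 then cT m (k+1) ε M * (M - M⁻¹) ^ (k+1) else 0) := by
    intro k _
    by_cases hp : (m + k) % 2 = 0
    · rw [if_pos (by omega), if_pos hp, if_pos (by omega),
        cT_succ ε M hM0, if_pos (by omega),
        Even.neg_one_pow (by rw [Nat.even_iff]; omega), one_mul]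
      ring
    · rw [if_neg (by omega), if_neg (by omega), if_neg (by omega)]
      ring
  rw [Finset.sum_congr rfl hsum, Finset.sum_add_distrib, ← Finset.mul_sum, ← Finset.mul_sum]
  have hX : ∑ k ∈ Finset.range (m+1),
      (if (m + k) % 2 = 0 then cT m k ε M * (M - M⁻¹) ^ k else 0) = Xs M ε m := rfl
  rw [hX]
  have hY2 : ∑ k ∈ Finset.range (m+1),
      (if (m + (k+1)) % 2 = 1 then cT m (k+1) ε M * (M - M⁻¹) ^ (k+1) else 0)
      = ∑ k ∈ Finset.range m,
        (if (m + (k+1)) % 2 = 1 then cT m (k+1) ε M * (M - M⁻¹) ^ (k+1) else 0) := by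
    rw [Finset.sum_range_succ, cT_big (by omega), zero_mul, ite_self, add_zero]
  have hY3 : Ys M ε m = (∑ k ∈ Finset.range m,
        (if (m + (k+1)) % 2 = 1 then cT m (k+1) ε M * (M - M⁻¹) ^ (k+1) else 0))
      + (if (m + 0) % 2 = 1 then cT m 0 ε M * (M - M⁻¹) ^ 0 else 0) := by
    rw [Ys, Finset.sum_range_succ']
  have hbd : (if (m + 1 + 0) % 2 = 0 then cT (m+1) 0 ε M * (M - M⁻¹) ^ 0 else 0)
      = M ^ (ε (m+1)) * (if (m + 0) % 2 = 1 then cT m 0 ε M * (M - M⁻¹) ^ 0 else 0) := by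
    by_cases hp : m % 2 = 1
    · rw [if_pos (by omega), if_pos (by omega),
        cT_succ_zero ε M hM0, Even.neg_one_pow (by rw [Nat.even_iff]; omega)]
      ring
    · rw [if_neg (by omega), if_neg (by omega), mul_zero]
  rw [hY2, hbd, hY3]
  ring

-- Part 5
lemma Tm00 (M : ℂ) (a : ℤ) : Tm M a 0 0 = (a : ℂ) * (M - M⁻¹) := rfl
lemma Tm01 (M : ℂ) (a : ℤ) : Tm M a 0 1 = M ^ (-a) := rfl
lemma Tm10 (M : ℂ) (a : ℤ) : Tm M a 1 0 = M ^ a := rfl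
lemma Tm11 (M : ℂ) (a : ℤ) : Tm M a 1 1 = 0 := rfl

lemma Pw_succ_apply (M : ℂ) (ε : ℕ → ℤ) (m : ℕ) (i j : Fin 2) :
    Pw M ε (m+1) i j = Pw M ε m i 0 * Tm M (ε (m+1)) 0 j + Pw M ε m i 1 * Tm M (ε (m+1)) 1 j := by
  show (Pw M ε m * Tm M (ε (m+1))) i j = _
  rw [Matrix.mul_apply, Fin.sum_univ_two]

lemma hatAltSum_zero (ε : ℕ → ℤ) (k : ℕ) (i : Fin k → ℕ) : hatAltSum 0 ε i = 0 := by
  simp [hatAltSum]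

lemma top_row (M : ℂ) (ε : ℕ → ℤ) (hM0 : M ≠ 0) :
    ∀ m, Pw M ε m 0 0 = Xs M ε m ∧ Pw M ε m 0 1 = Ys M ε m := by
  intro m
  induction m with
  | zero =>
    constructor
    · rw [Xs, Finset.sum_range_one, if_pos (by norm_num), cT_zero_eq, hatAltSum_zero,
        zpow_zero, pow_zero, mul_one]
      rfl
    · rw [Ys, Finset.sum_range_one, if_neg (by norm_num)]
      rfl
  | succ m ih =>
    constructor
    · rw [Pw_succ_apply, Tm00, Tm10, ih.1, ih.2, Xs_succ M ε m hM0]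
      ring
    · rw [Pw_succ_apply, Tm01, Tm11, ih.1, ih.2, Ys_succ M ε m hM0]
      ring

lemma eigen (M : ℂ) (ε : ℕ → ℤ) (hM0 : M ≠ 0) :
    ∀ m, (∀ t, 1 ≤ t → t ≤ m → ε t = 1 ∨ ε t = -1) →
    (Pw M ε m 0 0 + Pw M ε m 0 1 = M ^ (∑ t ∈ Finset.Icc 1 m, ε t)) ∧
    (Pw M ε m 1 0 + Pw M ε m 1 1 = M ^ (∑ t ∈ Finset.Icc 1 m, ε t)) ∧
    (Pw M ε m 1 0 - Pw M ε m 0 0 = (-1:ℂ)^(m+1) * M ^ (-∑ t ∈ Finset.Icc 1 m, ε t)) ∧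
    (Pw M ε m 1 1 - Pw M ε m 0 1 = (-1:ℂ)^m * M ^ (-∑ t ∈ Finset.Icc 1 m, ε t)) := by
  intro m
  induction m with
  | zero =>
    intro _
    have h0 : Finset.Icc 1 0 = (∅ : Finset ℕ) := by simp
    rw [h0]
    simp [Pw, Matrix.one_apply]
  | succ m ih =>
    intro hpm
    obtain ⟨e1, e2, e3, e4⟩ := ih (fun t h1 h2 => hpm t h1 (by omega))
    have hS : ∑ t ∈ Finset.Icc 1 (m+1), ε t = (∑ t ∈ Finset.Icc 1 m, ε t) + ε (m+1) :=
      Finset.sum_Icc_succ_top (by omega) ε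
    set S := ∑ t ∈ Finset.Icc 1 m, ε t with hSdef
    have hMM : M * M⁻¹ = 1 := mul_inv_cancel₀ hM0
    rcases hpm (m+1) (by omega) (by omega) with ha | ha
    · rw [hS, ha]
      refine ⟨?_, ?_, ?_, ?_⟩
      · rw [Pw_succ_apply, Pw_succ_apply, Tm00, Tm01, Tm10, Tm11, ha,
          zpow_add₀ hM0, zpow_one, zpow_neg_one]
        push_cast
        linear_combination M * e1
      · rw [Pw_succ_apply, Pw_succ_apply, Tm00, Tm01, Tm10, Tm11, ha,
          zpow_add₀ hM0, zpow_one, zpow_neg_one]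
        push_cast
        linear_combination M * e2
      · rw [Pw_succ_apply, Pw_succ_apply, Tm00, Tm10, ha, neg_add,
          zpow_add₀ hM0, zpow_one, zpow_neg_one]
        push_cast
        linear_combination (M - M⁻¹) * e3 + M * e4
      · rw [Pw_succ_apply, Pw_succ_apply, Tm01, Tm11, ha, neg_add,
          zpow_add₀ hM0, zpow_neg_one]
        push_cast
        linear_combination M⁻¹ * e3
    · rw [hS, ha]
      refine ⟨?_, ?_, ?_, ?_⟩
      · rw [Pw_succ_apply, Pw_succ_apply, Tm00, Tm01, Tm10, Tm11, ha, neg_neg,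
          zpow_add₀ hM0, zpow_one, zpow_neg_one]
        push_cast
        linear_combination M⁻¹ * e1
      · rw [Pw_succ_apply, Pw_succ_apply, Tm00, Tm01, Tm10, Tm11, ha, neg_neg,
          zpow_add₀ hM0, zpow_one, zpow_neg_one]
        push_cast
        linear_combination M⁻¹ * e2
      · rw [Pw_succ_apply, Pw_succ_apply, Tm00, Tm10, ha, neg_add, neg_neg,
          zpow_add₀ hM0, zpow_one, zpow_neg_one]
        push_cast
        linear_combination (-(M - M⁻¹)) * e3 + M⁻¹ * e4
      · rw [Pw_succ_apply, Pw_succ_apply, Tm01, Tm11, ha, neg_add, neg_neg,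
          zpow_add₀ hM0, zpow_one]
        push_cast
        linear_combination M * e3

lemma Pw_congr (M : ℂ) (ε₁ ε₂ : ℕ → ℤ) :
    ∀ m, (∀ t, 1 ≤ t → t ≤ m → ε₁ t = ε₂ t) → Pw M ε₁ m = Pw M ε₂ m := by
  intro m
  induction m with
  | zero => intro _; rfl
  | succ m ih =>
    intro h
    show Pw M ε₁ m * Tm M (ε₁ (m+1)) = Pw M ε₂ m * Tm M (ε₂ (m+1))
    rw [ih (fun t h1 h2 => h t h1 (by omega)), h (m+1) (by omega) (by omega)]

lemma Pw_front (M : ℂ) (ε : ℕ → ℤ) :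
    ∀ m, Pw M ε (m+1) = Tm M (ε 1) * Pw M (fun t => ε (t+1)) m := by
  intro m
  induction m with
  | zero =>
    show Pw M ε 0 * Tm M (ε 1) = Tm M (ε 1) * Pw M _ 0
    show (1 : Matrix (Fin 2) (Fin 2) ℂ) * Tm M (ε 1) = Tm M (ε 1) * 1
    rw [one_mul, mul_one]
  | succ m ih =>
    show Pw M ε (m+1) * Tm M (ε (m+2)) = Tm M (ε 1) * (Pw M (fun t => ε (t+1)) m * Tm M (ε (m+2)))
    rw [ih, mul_assoc]

-- Part 6
lemma eseq_window (e : ℕ → ℤ) (n : ℕ) :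
    ∀ t, 1 ≤ t → t ≤ 2*n → eseq e (n+1) (t+1) = eseq e n t := by
  intro t h1 h2
  unfold eseq
  by_cases htn : t ≤ n
  · rw [if_pos (by omega), if_pos htn]
    congr 1
    omega
  · rw [if_neg (by omega), if_neg htn]
    congr 1
    omega

lemma eseq_one (e : ℕ → ℤ) (n : ℕ) : eseq e (n+1) 1 = e (n+1) := by
  unfold eseq
  rw [if_pos (by omega)]
  congr 1

lemma eseq_top (e : ℕ → ℤ) (n : ℕ) : eseq e (n+1) (2*(n+1)) = e (n+1) := by
  unfold eseq
  rw [if_neg (by omega)]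
  congr 1
  omega

lemma eseq_pm (e : ℕ → ℤ) (he : ∀ i, 1 ≤ i → e i = 1 ∨ e i = -1) (n : ℕ) :
    ∀ t, 1 ≤ t → t ≤ 2*n → eseq e n t = 1 ∨ eseq e n t = -1 := by
  intro t h1 h2
  unfold eseq
  by_cases htn : t ≤ n
  · rw [if_pos htn]; exact he _ (by omega)
  · rw [if_neg htn]; exact he _ (by omega)

lemma sum_eseq (e : ℕ → ℤ) (n : ℕ) :
    ∑ t ∈ Finset.Icc 1 (2*n), eseq e n t = 2 * ∑ i ∈ Finset.Icc 1 n, e i := by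
  have hIcc : ∀ b : ℕ, Finset.Icc 1 b = Finset.Ioc 0 b := fun b => by
    ext x; simp [Finset.mem_Icc, Finset.mem_Ioc]; omega
  have hsplit : ∑ t ∈ Finset.Icc 1 (2*n), eseq e n t
      = (∑ t ∈ Finset.Ioc 0 n, eseq e n t) + ∑ t ∈ Finset.Ioc n (2*n), eseq e n t := by
    rw [hIcc, ← Finset.sum_Ioc_consecutive _ (by omega : 0 ≤ n) (by omega : n ≤ 2*n)]
  have hIco : ∀ b : ℕ, Finset.Icc 1 b = Finset.Ico 1 (b+1) := fun b => by
    ext x; simp [Finset.mem_Icc, Finset.mem_Ico]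
  have h1 : ∑ t ∈ Finset.Ioc 0 n, eseq e n t = ∑ i ∈ Finset.Icc 1 n, e i := by
    rw [← hIcc, hIco, Finset.sum_Ico_eq_sum_range, Finset.sum_Ico_eq_sum_range]
    rw [← Finset.sum_range_reflect]
    refine Finset.sum_congr rfl fun j hj => ?_
    rw [Finset.mem_range] at hj
    unfold eseq
    rw [if_pos (by omega)]
    congr 1
    omega
  have h2 : ∑ t ∈ Finset.Ioc n (2*n), eseq e n t = ∑ i ∈ Finset.Icc 1 n, e i := by
    have hIco2 : Finset.Ioc n (2*n) = Finset.Ico (n+1) (2*n+1) := by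
      ext x; simp [Finset.mem_Ioc, Finset.mem_Ico]
    rw [hIco2, hIco, Finset.sum_Ico_eq_sum_range, Finset.sum_Ico_eq_sum_range]
    refine Finset.sum_congr (by congr 1; omega) fun j hj => ?_
    rw [Finset.mem_range] at hj
    unfold eseq
    rw [if_neg (by omega)]
    congr 1
    omega
  rw [hsplit, h1, h2]
  ring

lemma sum_even_range (f : ℕ → ℂ) :
    ∀ N, (∑ k ∈ Finset.range (2*N+1), if k % 2 = 0 then f k else 0)
      = ∑ k ∈ Finset.range (N+1), f (2*k) := by
  intro N
  induction N with
  | zero =>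
    rw [show 2*0+1 = 0+1 from rfl, Finset.sum_range_one, Finset.sum_range_one,
      if_pos (by omega)]
  | succ N ih =>
    have h1 : 2*(N+1)+1 = (2*N+1) + 1 + 1 := by omega
    rw [h1, Finset.sum_range_succ, Finset.sum_range_succ, ih, Finset.sum_range_succ]
    rw [if_neg (by omega), if_pos (by omega), add_zero]
    have h2 : 2*N+1+1 = 2*(N+1) := by omega
    rw [h2, Finset.sum_range_succ (fun k => f (2*k)) (N+1), Finset.sum_range_succ (fun k => f (2*k)) N]

lemma fpoly_eq_Xs (e : ℕ → ℤ) (M : ℂ) (n : ℕ) :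
    fpoly e M ((M - M⁻¹)^2) n = Xs M (eseq e n) (2*n) := by
  rw [fpoly, Xs]
  have hc : ∀ k ∈ Finset.range (2*n+1),
      (if (2*n + k) % 2 = 0 then cT (2*n) k (eseq e n) M * (M - M⁻¹) ^ k else 0)
      = (if k % 2 = 0 then cT (2*n) k (eseq e n) M * (M - M⁻¹) ^ k else 0) := by
    intro k _
    by_cases hp : k % 2 = 0
    · rw [if_pos (by omega), if_pos hp]
    · rw [if_neg (by omega), if_neg hp]
  rw [Finset.sum_congr rfl hc, sum_even_range (fun k => cT (2*n) k (eseq e n) M * (M - M⁻¹) ^ k) n]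
  refine Finset.sum_congr rfl fun k _ => ?_
  rw [← pow_mul]

lemma prod_delta (e : ℕ → ℤ) (he : ∀ i, 1 ≤ i → e i = 1 ∨ e i = -1)
    (δ : ℕ → ℤ) (hδ1 : δ 1 = 1) (hδ : ∀ i, 2 ≤ i → δ i = e (i - 1) * e i) :
    ∀ i, 1 ≤ i → (∏ j ∈ Finset.Icc 1 i, δ j) = e 1 * e i := by
  intro i
  induction i with
  | zero => omega
  | succ i ih =>
    intro _
    by_cases hi : 1 ≤ i
    · rw [Finset.prod_Icc_succ_top (by omega), ih hi, hδ (i+1) (by omega)]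
      have hsq : e i * e i = 1 := by rcases he i hi with h | h <;> rw [h] <;> norm_num
      have : i + 1 - 1 = i := by omega
      rw [this]
      calc e 1 * e i * (e i * e (i+1)) = e 1 * (e i * e i) * e (i+1) := by ring
        _ = e 1 * e (i+1) := by rw [hsq]; ring
    · have hi0 : i = 0 := by omega
      subst hi0
      rw [show Finset.Icc 1 1 = {1} from rfl, Finset.prod_singleton, hδ1]
      rcases he 1 (by omega) with h | h <;> rw [h] <;> norm_num

-- Part 7: final assembly
lemma key_entry (M : ℂ) (hM0 : M ≠ 0) (p q r sP u : ℂ) (hu : u ≠ 0)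
    (e1 : p + q = u) (e3 : r - p = -u⁻¹) (e4 : sP - q = u⁻¹) (a : ℤ) (ha : a = 1 ∨ a = -1) :
    (((a : ℂ) * (M - M⁻¹)) * p + M ^ (-a) * r) * ((a : ℂ) * (M - M⁻¹))
      + (((a : ℂ) * (M - M⁻¹)) * q + M ^ (-a) * sP) * M ^ a + p
    = u * (M ^ a * M ^ a) + u⁻¹ * (M ^ (-a) * M ^ (-a)) := by
  have hq : q = u - p := by linear_combination e1
  have hr : r = p - u⁻¹ := by linear_combination e3
  have hsP : sP = q + u⁻¹ := by linear_combination e4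
  rcases ha with ha | ha <;>
  · subst ha
    rw [hr, hsP, hq]
    push_cast
    rw [zpow_one, zpow_neg_one]
    try rw [neg_neg]
    have hMM : M * M⁻¹ = 1 := mul_inv_cancel₀ hM0
    linear_combination (-p) * hMM

lemma two_mul_expand (M : ℂ) (hM0 : M ≠ 0) (s a : ℤ) :
    M ^ (2*(s+a)) = M ^ (2*s) * (M ^ a * M ^ a) ∧
    M ^ (-(2*(s+a))) = (M ^ (2*s))⁻¹ * (M ^ (-a) * M ^ (-a)) := by
  constructor
  · rw [show 2*(s+a) = 2*s + a + a by ring, zpow_add₀ hM0, zpow_add₀ hM0]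
    ring
  · rw [show -(2*(s+a)) = -(2*s) + -a + -a by ring, zpow_add₀ hM0, zpow_add₀ hM0, zpow_neg]
    ring


/-- Chebyshev form of sums of consecutive Alexander polynomials.
Let `Δ_n(M²) = f_n(M, z²)` (the Riley polynomial of `G(e(n))` at `λ = 0`, i.e. the
normalized Alexander polynomial at `t = M²`).  With `δ₁ = 1`, `δ_i = e_{i−1}·e_i`
for `i ≥ 2`, and `β_m = Σ_{i=1}^{m} δ₁·δ₂⋯δ_i`, for every `n ≥ 0`:
`Δ_{n+1}(M²) + Δ_n(M²) = M^{2β_{n+1}} + M^{−2β_{n+1}}`. -/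
theorem alexander_chebyshev (M : ℂ) (hM0 : M ≠ 0) (hM1 : M ≠ 1) (hMneg1 : M ≠ -1)
    (e : ℕ → ℤ) (he : ∀ i, 1 ≤ i → e i = 1 ∨ e i = -1)
    (δ : ℕ → ℤ) (hδ1 : δ 1 = 1) (hδ : ∀ i, 2 ≤ i → δ i = e (i - 1) * e i)
    (β : ℕ → ℤ) (hβ : ∀ m, β m = ∑ i ∈ Finset.Icc 1 m, ∏ j ∈ Finset.Icc 1 i, δ j) :
    ∀ n : ℕ,
      fpoly e M ((M - M⁻¹) ^ 2) (n + 1) + fpoly e M ((M - M⁻¹) ^ 2) n =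
        M ^ (2 * β (n + 1)) + M ^ (-(2 * β (n + 1))) := by
  intro n
  set ε : ℕ → ℤ := eseq e n with hε
  set ε' : ℕ → ℤ := eseq e (n+1) with hε'
  set a : ℤ := e (n+1) with haa
  -- the window identity
  have hP' : Pw M ε' (2*(n+1)) = Tm M a * Pw M ε (2*n) * Tm M a := by
    have h1 : 2*(n+1) = (2*n+1)+1 := by omega
    rw [h1]
    show Pw M ε' (2*n+1) * Tm M (ε' (2*n+1+1)) = _
    rw [Pw_front M ε' (2*n),
      Pw_congr M (fun t => ε' (t+1)) ε (2*n) (fun t ht1 ht2 => eseq_window e n t ht1 ht2)]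
    have htop : ε' (2*n+1+1) = a := by
      rw [hε', show 2*n+1+1 = 2*(n+1) by omega]
      exact eseq_top e n
    have hone : ε' 1 = a := eseq_one e n
    rw [htop, hone]
  have hfn : fpoly e M ((M - M⁻¹)^2) n = Pw M ε (2*n) 0 0 := by
    rw [fpoly_eq_Xs, (top_row M ε hM0 (2*n)).1]
  have hfn1 : fpoly e M ((M - M⁻¹)^2) (n+1) = Pw M ε' (2*(n+1)) 0 0 := by
    rw [fpoly_eq_Xs, (top_row M ε' hM0 (2*(n+1))).1]
  obtain ⟨e1, e2, e3, e4⟩ := eigen M ε hM0 (2*n) (eseq_pm e he n)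
  rw [sum_eseq] at e1 e2 e3 e4
  set s : ℤ := ∑ i ∈ Finset.Icc 1 n, e i with hs
  have hm2 : (-1:ℂ)^(2*n+1) = -1 := by rw [pow_succ, pow_mul]; norm_num
  have hm1 : (-1:ℂ)^(2*n) = 1 := by rw [pow_mul]; norm_num
  rw [hm2] at e3
  rw [hm1, one_mul] at e4
  have hu : (M : ℂ) ^ (2*s) ≠ 0 := zpow_ne_zero _ hM0
  have hv : M ^ (-(2*s)) = (M ^ (2*s))⁻¹ := by rw [zpow_neg]
  rw [hv] at e3 e4
  rw [neg_one_mul] at e3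
  -- beta
  have hbeta : β (n+1) = e 1 * (s + a) := by
    rw [hβ (n+1),
      Finset.sum_congr rfl (fun i hi =>
        prod_delta e he δ hδ1 hδ i (Finset.mem_Icc.1 hi).1),
      ← Finset.mul_sum, Finset.sum_Icc_succ_top (by omega : 1 ≤ n+1)]
  -- expand the matrix entry
  have hexp : ∀ (A B C : Matrix (Fin 2) (Fin 2) ℂ),
      (A*B*C) 0 0 = (A 0 0 * B 0 0 + A 0 1 * B 1 0) * C 0 0
        + (A 0 0 * B 0 1 + A 0 1 * B 1 1) * C 1 0 := by
    intro A B C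
    rw [Matrix.mul_apply, Fin.sum_univ_two, Matrix.mul_apply, Matrix.mul_apply,
      Fin.sum_univ_two, Fin.sum_univ_two]
  rw [hfn1, hfn, hP', hexp, Tm00, Tm01, Tm10]
  have hkey := key_entry M hM0 (Pw M ε (2*n) 0 0) (Pw M ε (2*n) 0 1) (Pw M ε (2*n) 1 0)
    (Pw M ε (2*n) 1 1) (M ^ (2*s)) hu e1 e3 e4 a (he (n+1) (by omega))
  rw [hkey]
  obtain ⟨hA, hB⟩ := two_mul_expand M hM0 s a
  rcases he 1 (by omega) with h1 | h1
  · rw [hbeta, h1, one_mul, hA, hB]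
  · rw [hbeta, h1, show (2 * (-1 * (s + a))) = -(2*(s+a)) by ring, neg_neg, hA, hB]
    ring
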